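/- With the Stinespring setup as above, I_c(ρ,Φ) = S(ρ) holds if and only if S(Ω_B) − S(Ω_C) = S(Ω_{BC}), i.e., the Araki–Lieb inequality is saturated for the BC marginal of the dilated pure state Ω_{ABC}. -/

import Mathlib

/-!
Let `Ω = (1 ⊗ U)(u ⊗ ε)`. The channel output `Φ ρ` is the marginal `Ω_B`, and
`(1 ⊗ Φ)(|u⟩⟨u|)` is `Ω_{AB}`, whose partial trace over `A` is `Ω_B` again. Complementary
marginals of a pure state have equal entropy, because `M Mᴴ` and `Mᴴ M` have the same nonzero
spectrum; so `S(Ω_{AB}) = S(Ω_C)`. Since `U` is unitary and `ε` is a unit vector, the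
`A`-marginal of `Ω` is that of `u`, whence `S(Ω_{BC}) = S(Ω_A) = S(u_A) = S(u_B) = S(ρ)`.
Both sides of the equivalence are therefore the equation `S(Ω_B) - S(Ω_C) = S(Ω_{BC})`.
-/
open Matrix Kronecker BigOperators
open scoped ComplexOrder

noncomputable section

/-- Partial trace over the second (right) tensor factor. -/
def ptraceRight {m n : Type*} [Fintype n]
    (ρ : Matrix (m × n) (m × n) ℂ) : Matrix m m ℂ :=
  fun i j => ∑ k : n, ρ (i, k) (j, k)

/-- Partial trace over the first (left) tensor factor. -/
def ptraceLeft {m n : Type*} [Fintype m]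
    (ρ : Matrix (m × n) (m × n) ℂ) : Matrix n n ℂ :=
  fun i j => ∑ k : m, ρ (k, i) (k, j)

/-- Partial trace of a tripartite state over the last factor. -/
def trC {a b c : Type*} [Fintype c]
    (ρ : Matrix (a × b × c) (a × b × c) ℂ) : Matrix (a × b) (a × b) ℂ :=
  fun i j => ∑ k : c, ρ (i.1, i.2, k) (j.1, j.2, k)

/-- Partial trace of a tripartite state over the first and last factors. -/
def trAC {a b c : Type*} [Fintype a] [Fintype c]
    (ρ : Matrix (a × b × c) (a × b × c) ℂ) : Matrix b b ℂ :=
  fun i j => ∑ x : a, ∑ k : c, ρ (x, i, k) (x, j, k)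

/-- A density matrix: positive semidefinite with unit trace. -/
def IsDensity {n : Type*} [Fintype n] (ρ : Matrix n n ℂ) : Prop :=
  ρ.PosSemidef ∧ ρ.trace = 1

/-- Von Neumann entropy `S(ρ) = -Tr (ρ log ρ)`, computed from the eigenvalues. -/
def vNEntropy {n : Type*} [Fintype n] [DecidableEq n] (ρ : Matrix n n ℂ) : ℝ :=
  if h : ρ.IsHermitian then -∑ i, (h.eigenvalues i * Real.log (h.eigenvalues i)) else 0

/-- `Φ ⊗ 1` : a map on the first tensor factor extended by the identity. -/
def tensorId {h h' k : Type*}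
    (Φ : Matrix h h ℂ → Matrix h' h' ℂ)
    (ρ : Matrix (h × k) (h × k) ℂ) : Matrix (h' × k) (h' × k) ℂ :=
  fun i j => Φ (fun x y => ρ (x, i.2) (y, j.2)) i.1 j.1

/-- `1 ⊗ Φ` : a map on the second tensor factor extended by the identity. -/
def idTensor {h h' k : Type*}
    (Φ : Matrix h h ℂ → Matrix h' h' ℂ)
    (ρ : Matrix (k × h) (k × h) ℂ) : Matrix (k × h') (k × h') ℂ :=
  fun i j => Φ (fun x y => ρ (i.1, x) (j.1, y)) i.2 j.2

/-- A quantum channel: linear, trace preserving and completely positive map. -/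
structure QChannel (m n : Type*) [Fintype m] [Fintype n] where
  map : Matrix m m ℂ → Matrix n n ℂ
  linear : ∀ (a b : ℂ) (ρ σ : Matrix m m ℂ), map (a • ρ + b • σ) = a • map ρ + b • map σ
  trace_preserving : ∀ ρ : Matrix m m ℂ, (map ρ).trace = ρ.trace
  completely_positive : ∀ (d : ℕ) (ρ : Matrix (m × Fin d) (m × Fin d) ℂ),
    ρ.PosSemidef → (tensorId map ρ).PosSemidef

/-- Pure state projector `|v⟩⟨v|`. -/
def proj {n : Type*} (v : n → ℂ) : Matrix n n ℂ := Matrix.vecMulVec v (star v)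

/-- Unit vector. -/
def IsUnit' {n : Type*} [Fintype n] (v : n → ℂ) : Prop := ∑ i, Complex.normSq (v i) = 1

open Polynomial in
theorem Matrix.IsHermitian.vNEntropy_eq_sum_roots_charpoly {n : Type*} [Fintype n]
    [DecidableEq n] {A : Matrix n n ℂ} (hA : A.IsHermitian) :
    vNEntropy A = (A.charpoly.roots.map fun z => Real.negMulLog z.re).sum := by
  rw [vNEntropy, dif_pos hA, hA.roots_charpoly_eq_eigenvalues, Multiset.map_map,
    ← Finset.sum_eq_multiset_sum, ← Finset.sum_neg_distrib]
  simp [Real.negMulLog]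

open Polynomial in
theorem vNEntropy_eq_of_X_pow_mul_charpoly_eq {m n : Type*} [Fintype m] [Fintype n]
    [DecidableEq m] [DecidableEq n] {A : Matrix m m ℂ} {B : Matrix n n ℂ}
    (hA : A.IsHermitian) (hB : B.IsHermitian) {k l : ℕ}
    (h : X ^ k * A.charpoly = X ^ l * B.charpoly) :
    vNEntropy A = vNEntropy B := by
  have hroots := congrArg roots h
  rw [roots_mul (mul_ne_zero (pow_ne_zero _ X_ne_zero) A.charpoly_monic.ne_zero),
    roots_mul (mul_ne_zero (pow_ne_zero _ X_ne_zero) B.charpoly_monic.ne_zero),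
    roots_X_pow, roots_X_pow] at hroots
  -- the roots differ only by zeros, where `negMulLog` vanishes
  have hsum := congrArg (fun s : Multiset ℂ => (s.map fun z => Real.negMulLog z.re).sum) hroots
  simpa [Multiset.nsmul_singleton, hA.vNEntropy_eq_sum_roots_charpoly,
    hB.vNEntropy_eq_sum_roots_charpoly] using hsum

theorem vNEntropy_mul_conjTranspose_self {m n : Type*} [Fintype m] [Fintype n]
    [DecidableEq m] [DecidableEq n] (M : Matrix m n ℂ) :
    vNEntropy (M * Mᴴ) = vNEntropy (Mᴴ * M) :=
  vNEntropy_eq_of_X_pow_mul_charpoly_eq (isHermitian_mul_conjTranspose_self M)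
    (isHermitian_conjTranspose_mul_self M) (charpoly_mul_comm' M Mᴴ)

theorem vNEntropy_transpose {n : Type*} [Fintype n] [DecidableEq n] (A : Matrix n n ℂ) :
    vNEntropy Aᵀ = vNEntropy A := by
  by_cases hA : A.IsHermitian
  · exact vNEntropy_eq_of_X_pow_mul_charpoly_eq hA.transpose hA
      (k := 0) (l := 0) (by rw [charpoly_transpose])
  · rw [vNEntropy, vNEntropy, dif_neg hA, dif_neg (mt isHermitian_transpose_iff.mp hA)]

theorem vNEntropy_ptraceRight_proj {m n : Type*} [Fintype m] [Fintype n]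
    [DecidableEq m] [DecidableEq n] (v : m × n → ℂ) :
    vNEntropy (ptraceRight (proj v)) = vNEntropy (ptraceLeft (proj v)) := by
  let M : Matrix m n ℂ := of fun i j => v (i, j)
  have hRight : ptraceRight (proj v) = M * Mᴴ := by
    ext i j
    simp [M, ptraceRight, proj, vecMulVec_apply, mul_apply]
  have hLeft : ptraceLeft (proj v) = (Mᴴ * M)ᵀ := by
    ext i j
    simp [M, ptraceLeft, proj, vecMulVec_apply, mul_apply, mul_comm]
  rw [hRight, hLeft, vNEntropy_transpose, vNEntropy_mul_conjTranspose_self]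

theorem vNEntropy_trC_proj {a b c : Type*} [Fintype a] [Fintype b] [Fintype c]
    [DecidableEq a] [DecidableEq b] [DecidableEq c] (Ω : a × b × c → ℂ) :
    vNEntropy (trC (proj Ω)) = vNEntropy (ptraceLeft (ptraceLeft (proj Ω))) := by
  let Ω' : (a × b) × c → ℂ := Ω ∘ Equiv.prodAssoc a b c
  have hAB : trC (proj Ω) = ptraceRight (proj Ω') := rfl
  have hC : ptraceLeft (ptraceLeft (proj Ω)) = ptraceLeft (proj Ω') := by
    ext i j
    simp only [ptraceLeft, proj, vecMulVec_apply, Fintype.sum_prod_type]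
    exact Finset.sum_comm
  rw [hAB, hC, vNEntropy_ptraceRight_proj]

theorem ptraceLeft_idTensor {h h' k : Type*} [Fintype k]
    (Φ : Matrix h h ℂ → Matrix h' h' ℂ) (hΦ : ∀ σ τ, Φ (σ + τ) = Φ σ + Φ τ)
    (X : Matrix (k × h) (k × h) ℂ) :
    ptraceLeft (idTensor Φ X) = Φ (ptraceLeft X) := by
  let Φ' : Matrix h h ℂ →+ Matrix h' h' ℂ := AddMonoidHom.mk' Φ hΦ
  have hsum : ptraceLeft X = ∑ x : k, of fun i j => X (x, i) (x, j) := by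
    ext i j
    simp [ptraceLeft, Matrix.sum_apply]
  change _ = Φ' _
  rw [hsum, map_sum]
  ext i j
  simp only [ptraceLeft, idTensor, Matrix.sum_apply, Φ', AddMonoidHom.mk'_apply]
  rfl

theorem ptraceLeft_trC {a b c : Type*} [Fintype a] [Fintype c]
    (X : Matrix (a × b × c) (a × b × c) ℂ) :
    ptraceLeft (trC X) = trAC X := rfl

theorem ptraceRight_add {m n : Type*} [Fintype n] (X Y : Matrix (m × n) (m × n) ℂ) :
    ptraceRight (X + Y) = ptraceRight X + ptraceRight Y := by
  ext i j
  simp [ptraceRight, Finset.sum_add_distrib]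

theorem mul_vecMulVec_mul_conjTranspose {m n : Type*} [Fintype n] (V : Matrix m n ℂ)
    (x y : n → ℂ) :
    V * vecMulVec x (star y) * Vᴴ = vecMulVec (V *ᵥ x) (star (V *ᵥ y)) := by
  rw [mul_vecMulVec, vecMulVec_mul, star_mulVec]

theorem idTensor_stinespring_proj {a n m e c : Type*} [Fintype n] [Fintype c] [Fintype e]
    (V : Matrix (m × e) (n × c) ℂ) (u : a × n → ℂ) (ε : c → ℂ) :
    idTensor (fun σ => ptraceRight (V * (σ ⊗ₖ proj ε) * Vᴴ)) (proj u) =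
      trC (proj fun p : a × m × e => (V *ᵥ fun q => u (p.1, q.1) * ε q.2) p.2) := by
  ext ⟨x, i⟩ ⟨y, j⟩
  let w : a → n × c → ℂ := fun x q => u (x, q.1) * ε q.2
  have hslice :
      (of fun s t => proj u (x, s) (y, t)) ⊗ₖ proj ε = vecMulVec (w x) (star (w y)) := by
    ext q q'
    simp only [kroneckerMap_apply, proj, vecMulVec_apply, of_apply, Pi.star_apply, w, star_mul']
    ring
  change ptraceRight (V * ((of fun s t => proj u (x, s) (y, t)) ⊗ₖ proj ε) * Vᴴ) i j = _
  rw [hslice, mul_vecMulVec_mul_conjTranspose]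
  simp [ptraceRight, trC, proj, vecMulVec_apply, w]

theorem ptraceRight_proj_mulVec_of_isometry {a m n : Type*} [Fintype m] [Fintype n]
    [DecidableEq n] (V : Matrix m n ℂ) (hV : Vᴴ * V = 1) (w : a → n → ℂ) :
    ptraceRight (proj fun p : a × m => (V *ᵥ w p.1) p.2) =
      ptraceRight (proj fun p : a × n => w p.1 p.2) := by
  ext i j
  change (V *ᵥ w i) ⬝ᵥ star (V *ᵥ w j) = w i ⬝ᵥ star (w j)
  rw [star_mulVec, dotProduct_comm, ← dotProduct_mulVec, mulVec_mulVec, hV, one_mulVec,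
    dotProduct_comm]

theorem ptraceRight_proj_mul_of_isUnit' {a n c : Type*} [Fintype n] [Fintype c]
    (u : a × n → ℂ) (ε : c → ℂ) (hε : IsUnit' ε) :
    ptraceRight (proj fun p : a × n × c => u (p.1, p.2.1) * ε p.2.2) = ptraceRight (proj u) := by
  have hnorm : ∑ k, ε k * star (ε k) = 1 := by
    simp_rw [RCLike.star_def, Complex.mul_conj]
    exact_mod_cast hε
  ext i j
  simp only [ptraceRight, proj, vecMulVec_apply, Pi.star_apply, star_mul', Fintype.sum_prod_type]
  refine Finset.sum_congr rfl fun y _ => ?_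
  calc ∑ k, u (i, y) * ε k * (star (u (j, y)) * star (ε k))
      = u (i, y) * star (u (j, y)) * ∑ k, ε k * star (ε k) := by
        rw [Finset.mul_sum]; exact Finset.sum_congr rfl fun k _ => by ring
    _ = u (i, y) * star (u (j, y)) := by rw [hnorm, mul_one]

theorem coherent_information_max_iff_arakiLieb_saturation_general {a b c : Type*}
    [Fintype a] [Fintype b] [Fintype c] [DecidableEq a] [DecidableEq b] [DecidableEq c]
    (U : Matrix (b × c) (b × c) ℂ) (hU : U ∈ Matrix.unitaryGroup (b × c) ℂ)
    (ε : c → ℂ) (hε : IsUnit' ε)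
    (Φ : Matrix b b ℂ → Matrix b b ℂ)
    (hΦ : Φ = fun σ => ptraceRight (U * (σ ⊗ₖ proj ε) * Uᴴ))
    (ρ : Matrix b b ℂ)
    (u : a × b → ℂ) (hu : ptraceLeft (proj u) = ρ)
    (Ω : a × b × c → ℂ)
    (hΩ : Ω = fun p => ∑ q : b × c, U (p.2.1, p.2.2) q * u (p.1, q.1) * ε q.2) :
    vNEntropy (Φ ρ) - vNEntropy (idTensor Φ (proj u)) = vNEntropy ρ ↔
      vNEntropy (trAC (proj Ω)) - vNEntropy (ptraceLeft (ptraceLeft (proj Ω))) =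
        vNEntropy (ptraceLeft (proj Ω)) := by
  have hΩ' : Ω = fun p => (U *ᵥ fun q => u (p.1, q.1) * ε q.2) p.2 := by
    simp [hΩ, mulVec, dotProduct, mul_assoc]
  have hΦ_add : ∀ σ τ, Φ (σ + τ) = Φ σ + Φ τ := by
    simp [hΦ, add_kronecker, Matrix.mul_add, Matrix.add_mul, ptraceRight_add]
  have hAB : idTensor Φ (proj u) = trC (proj Ω) := by
    rw [hΦ, hΩ']
    exact idTensor_stinespring_proj U u ε
  have hB : Φ ρ = trAC (proj Ω) := by
    rw [← hu, ← ptraceLeft_trC, ← hAB, ptraceLeft_idTensor Φ hΦ_add]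
  have hA : ptraceRight (proj Ω) = ptraceRight (proj u) := by
    rw [hΩ']
    exact (ptraceRight_proj_mulVec_of_isometry U (mem_unitaryGroup_iff'.mp hU)
      fun x q => u (x, q.1) * ε q.2).trans (ptraceRight_proj_mul_of_isUnit' u ε hε)
  have hBC : vNEntropy (ptraceLeft (proj Ω)) = vNEntropy ρ := by
    rw [← vNEntropy_ptraceRight_proj, hA, vNEntropy_ptraceRight_proj, hu]
  rw [hB, hAB, vNEntropy_trC_proj, hBC]

/-- `I_c(ρ,Φ) = S(ρ)` iff the Araki–Lieb inequality is saturated for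
the `BC` marginal of the Stinespring-dilated pure state. -/
theorem coherent_information_max_iff_arakiLieb_saturation {a b c : Type*}
    [Fintype a] [Fintype b] [Fintype c] [DecidableEq a] [DecidableEq b] [DecidableEq c]
    (U : Matrix (b × c) (b × c) ℂ) (hU : U ∈ Matrix.unitaryGroup (b × c) ℂ)
    (ε : c → ℂ) (hε : IsUnit' ε)
    (Φ : Matrix b b ℂ → Matrix b b ℂ)
    (hΦ : Φ = fun σ => ptraceRight (U * (σ ⊗ₖ proj ε) * Uᴴ))
    (ρ : Matrix b b ℂ) (hρ : IsDensity ρ)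
    (u : a × b → ℂ) (hu : ptraceLeft (proj u) = ρ)
    (Ω : a × b × c → ℂ)
    (hΩ : Ω = fun p => ∑ q : b × c, U (p.2.1, p.2.2) q * u (p.1, q.1) * ε q.2) :
    vNEntropy (Φ ρ) - vNEntropy (idTensor Φ (proj u)) = vNEntropy ρ ↔
      vNEntropy (trAC (proj Ω)) - vNEntropy (ptraceLeft (ptraceLeft (proj Ω))) =
        vNEntropy (ptraceLeft (proj Ω)) :=
  coherent_information_max_iff_arakiLieb_saturation_general U hU ε hε Φ hΦ ρ u hu Ω hΩ
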